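/- Every positive-definite Hermitian 2×2 complex matrix h with det h = 1 can be written as h = exp(v₁σ₁ + v₂σ₂ + v₃σ₃) for some real numbers v₁, v₂, v₃, where σ₁, σ₂, σ₃ are the Pauli matrices; explicitly, h = cosh|v|·I + (sinh|v|/|v|)(v₁σ₁ + v₂σ₂ + v₃σ₃) when v ≠ 0. -/

import Mathlib

open scoped ComplexOrder
open Matrix

/-- The Pauli matrices σ₁, σ₂, σ₃. -/
noncomputable def pauli : Fin 3 → Matrix (Fin 2) (Fin 2) ℂ
  | 0 => !![0, 1; 1, 0]
  | 1 => !![0, -Complex.I; Complex.I, 0]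
  | 2 => !![1, 0; 0, -1]

/-- The Euclidean norm of (v₁, v₂, v₃). -/
noncomputable def vnorm (v : Fin 3 → ℝ) : ℝ := Real.sqrt (v 0 ^ 2 + v 1 ^ 2 + v 2 ^ 2)

/-!
A Hermitian 2×2 matrix is `α • 1 + w·σ` with `α` real and `w ∈ ℝ³`; its trace is `2α` and its
determinant `α² - |w|²`, so positivity and `det = 1` force `α = √(1 + |w|²)`. Since
`(v·σ)² = |v|² • 1`, the exponential series splits into even and odd parts,
`exp (v·σ) = cosh |v| • 1 + (sinh |v| / |v|) • v·σ`, and `v = (arsinh |w| / |w|) • w` makes this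
equal to `√(1 + |w|²) • 1 + w·σ`.
-/

theorem NormedSpace.exp_eq_cosh_add_sinh_div_of_sq_eq {A : Type*} [Ring A] [Algebra ℂ A]
    [TopologicalSpace A] [IsTopologicalRing A] [T2Space A] [ContinuousSMul ℂ A]
    {N : A} {c : ℂ} (hc : c ≠ 0) (hN : N ^ 2 = c ^ 2 • 1) :
    NormedSpace.exp N = Complex.cosh c • 1 + (Complex.sinh c / c) • N := by
  have hpow_even (n : ℕ) : N ^ (2 * n) = c ^ (2 * n) • (1 : A) := by
    rw [pow_mul, hN, smul_pow, one_pow, ← pow_mul]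
  rw [NormedSpace.exp_eq_tsum ℂ]
  refine HasSum.tsum_eq (HasSum.even_add_odd ?_ ?_)
  · convert (Complex.hasSum_cosh c).smul_const (1 : A) using 2 with n
    rw [hpow_even, smul_smul, div_eq_inv_mul]
  · convert ((Complex.hasSum_sinh c).div_const c).smul_const N using 2 with n
    rw [pow_succ, hpow_even, smul_mul_assoc, one_mul, smul_smul, pow_succ,
      mul_div_assoc, mul_div_assoc, div_div_cancel_left' hc, mul_comm]

lemma vnorm_eq_norm (v : Fin 3 → ℝ) :
    vnorm v = ‖(WithLp.toLp 2 v : EuclideanSpace ℝ (Fin 3))‖ := by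
  rw [EuclideanSpace.norm_eq, vnorm, Fin.sum_univ_three]
  simp only [Real.norm_eq_abs, sq_abs]

lemma vnorm_eq_zero {v : Fin 3 → ℝ} : vnorm v = 0 ↔ v = 0 := by
  rw [vnorm_eq_norm, norm_eq_zero, WithLp.toLp_eq_zero]

lemma vnorm_smul (c : ℝ) (v : Fin 3 → ℝ) : vnorm (c • v) = |c| * vnorm v := by
  rw [vnorm_eq_norm, vnorm_eq_norm, WithLp.toLp_smul, norm_smul, Real.norm_eq_abs]

lemma vnorm_sq (v : Fin 3 → ℝ) : vnorm v ^ 2 = v 0 ^ 2 + v 1 ^ 2 + v 2 ^ 2 :=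
  Real.sq_sqrt (by positivity)

noncomputable def pauliDot (v : Fin 3 → ℝ) : Matrix (Fin 2) (Fin 2) ℂ := ∑ a, (v a : ℂ) • pauli a

lemma pauliDot_eq (v : Fin 3 → ℝ) :
    pauliDot v = !![(v 2 : ℂ), v 0 - v 1 * Complex.I; v 0 + v 1 * Complex.I, -(v 2 : ℂ)] := by
  ext i j
  fin_cases i <;> fin_cases j <;>
    simp [pauliDot, pauli, Fin.sum_univ_three, sub_eq_add_neg, mul_comm]

lemma pauliDot_zero : pauliDot 0 = 0 := by
  simp [pauliDot]

lemma pauliDot_smul (c : ℝ) (v : Fin 3 → ℝ) : pauliDot (c • v) = (c : ℂ) • pauliDot v := by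
  simp only [pauliDot, Finset.smul_sum, smul_smul, Pi.smul_apply, smul_eq_mul, Complex.ofReal_mul]

lemma pauliDot_sq (v : Fin 3 → ℝ) : pauliDot v ^ 2 = (vnorm v : ℂ) ^ 2 • 1 := by
  rw [← Complex.ofReal_pow, vnorm_sq, pauliDot_eq, sq]
  ext i j
  fin_cases i <;> fin_cases j <;> simp [Matrix.mul_apply] <;> ring_nf <;> simp

lemma trace_smul_one_add_pauliDot (α : ℝ) (v : Fin 3 → ℝ) :
    ((α : ℂ) • 1 + pauliDot v).trace = ((2 * α : ℝ) : ℂ) := by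
  rw [pauliDot_eq, Matrix.trace_fin_two]
  simp
  ring

lemma det_smul_one_add_pauliDot (α : ℝ) (v : Fin 3 → ℝ) :
    ((α : ℂ) • 1 + pauliDot v).det = ((α ^ 2 - vnorm v ^ 2 : ℝ) : ℂ) := by
  rw [vnorm_sq, pauliDot_eq, Matrix.det_fin_two]
  simp
  linear_combination (v 1 : ℂ) ^ 2 * Complex.I_sq

lemma Matrix.IsHermitian.exists_eq_smul_one_add_pauliDot {h : Matrix (Fin 2) (Fin 2) ℂ}
    (hh : h.IsHermitian) : ∃ (α : ℝ) (v : Fin 3 → ℝ), h = (α : ℂ) • 1 + pauliDot v := by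
  refine ⟨((h 0 0).re + (h 1 1).re) / 2,
    ![(h 0 1).re, -(h 0 1).im, ((h 0 0).re - (h 1 1).re) / 2], ?_⟩
  have h00 : (h 0 0).im = 0 := Complex.conj_eq_iff_im.mp (hh.apply 0 0)
  have h11 : (h 1 1).im = 0 := Complex.conj_eq_iff_im.mp (hh.apply 1 1)
  have h10 : h 1 0 = star (h 0 1) := (hh.apply 1 0).symm
  rw [pauliDot_eq]
  ext i j
  fin_cases i <;> fin_cases j <;> simp [Complex.ext_iff, h00, h11, h10] <;> ring

lemma exp_pauliDot {v : Fin 3 → ℝ} (hv : v ≠ 0) :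
    NormedSpace.exp (pauliDot v) = (Real.cosh (vnorm v) : ℂ) • (1 : Matrix (Fin 2) (Fin 2) ℂ)
      + ((Real.sinh (vnorm v) / vnorm v : ℝ) : ℂ) • pauliDot v := by
  have hne : (vnorm v : ℂ) ≠ 0 := Complex.ofReal_ne_zero.mpr (vnorm_eq_zero.not.mpr hv)
  rw [NormedSpace.exp_eq_cosh_add_sinh_div_of_sq_eq hne (pauliDot_sq v)]
  push_cast
  rfl

/-- At `w = 0` the division is Lean's `x / 0 = 0`, giving `pauliLog 0 = 0`. -/
noncomputable def pauliLog (w : Fin 3 → ℝ) : Fin 3 → ℝ :=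
  (Real.arsinh (vnorm w) / vnorm w) • w

lemma vnorm_pauliLog (w : Fin 3 → ℝ) : vnorm (pauliLog w) = Real.arsinh (vnorm w) := by
  have hr : 0 ≤ vnorm w := Real.sqrt_nonneg _
  rw [pauliLog, vnorm_smul, abs_of_nonneg (div_nonneg (Real.arsinh_nonneg_iff.mpr hr) hr)]
  rcases hr.eq_or_lt with h0 | hpos
  · simp [← h0]
  · exact div_mul_cancel₀ _ hpos.ne'

lemma exp_pauliDot_pauliLog (w : Fin 3 → ℝ) :
    NormedSpace.exp (pauliDot (pauliLog w)) =
      ((√(1 + vnorm w ^ 2) : ℝ) : ℂ) • 1 + pauliDot w := by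
  rcases eq_or_ne w 0 with rfl | hw
  · simp [pauliLog, pauliDot_zero, vnorm_eq_zero.mpr]
  have hr : vnorm w ≠ 0 := vnorm_eq_zero.not.mpr hw
  have ht : Real.arsinh (vnorm w) ≠ 0 := Real.arsinh_eq_zero_iff.not.mpr hr
  have hv : pauliLog w ≠ 0 := smul_ne_zero (div_ne_zero ht hr) hw
  rw [exp_pauliDot hv, vnorm_pauliLog, Real.cosh_arsinh, Real.sinh_arsinh, pauliLog,
    pauliDot_smul, smul_smul, ← Complex.ofReal_mul, div_mul_div_cancel₀ ht, div_self hr,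
    Complex.ofReal_one, one_smul]

theorem hermitian_posDef_det_one_eq_exp_pauli_general
    (h : Matrix (Fin 2) (Fin 2) ℂ) (hpos : h.PosDef)
    (hdet : h.det = 1) :
    ∃ v : Fin 3 → ℝ,
      h = NormedSpace.exp (∑ a, (v a : ℂ) • pauli a) ∧
      (v ≠ 0 →
        h = (Real.cosh (vnorm v) : ℂ) • (1 : Matrix (Fin 2) (Fin 2) ℂ)
          + ((Real.sinh (vnorm v) / vnorm v : ℝ) : ℂ) • (∑ a, (v a : ℂ) • pauli a)) := by
  obtain ⟨α, w, rfl⟩ := hpos.isHermitian.exists_eq_smul_one_add_pauliDot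
  have hα : α = √(1 + vnorm w ^ 2) := by
    have hα_pos : 0 < α := by
      have htrace := hpos.trace_pos
      rw [trace_smul_one_add_pauliDot, Complex.zero_lt_real] at htrace
      linarith
    have hα_sq : α ^ 2 - vnorm w ^ 2 = 1 := by
      exact_mod_cast (det_smul_one_add_pauliDot α w).symm.trans hdet
    rw [← Real.sqrt_sq hα_pos.le]
    congr 1
    linarith
  rw [hα, ← exp_pauliDot_pauliLog]
  exact ⟨pauliLog w, rfl, exp_pauliDot⟩

/-- Every positive-definite Hermitian 2×2 complex matrix with determinant 1 is the
exponential of a real linear combination of Pauli matrices, and explicitly equals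
cosh|v|·1 + (sinh|v|/|v|)·(v·σ) when v ≠ 0. -/
theorem hermitian_posDef_det_one_eq_exp_pauli
    (h : Matrix (Fin 2) (Fin 2) ℂ) (hherm : h.IsHermitian) (hpos : h.PosDef)
    (hdet : h.det = 1) :
    ∃ v : Fin 3 → ℝ,
      h = NormedSpace.exp (∑ a, (v a : ℂ) • pauli a) ∧
      (v ≠ 0 →
        h = (Real.cosh (vnorm v) : ℂ) • (1 : Matrix (Fin 2) (Fin 2) ℂ)
          + ((Real.sinh (vnorm v) / vnorm v : ℝ) : ℂ) • (∑ a, (v a : ℂ) • pauli a)) :=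
  hermitian_posDef_det_one_eq_exp_pauli_general h hpos hdet
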